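/- Let (W, ⊑) be a WQO partitioned as W = W_A ∪ W_B, and let Pre, Pre-tilde be the predecessor and dual-predecessor operators of a transition relation → on W satisfying Pre(X) = Pre(C↑(X)). If the transition relation strictly alternates between W_A and W_B (every step from W_A leads into W_B and vice versa), then the least fixpoint of F(X) = V ∪ (W_A ∩ Pre(X)) ∪ (W_B ∩ Pre-tilde(X)) equals the least fixpoint of F'(X) = V ∪ (W_A ∩ Pre(C↑(X))) ∪ (W_B ∩ Pre-tilde(V ∪ Pre(C↑(X)))). -/

import Mathlib

variable {W : Type*} [Preorder W]

def Cup (V : Set W) : Set W := {w | ∃ v ∈ V, v ≤ w}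
def Pre (step : W → W → Prop) (V : Set W) : Set W := {σ | ∃ ρ ∈ V, step σ ρ}
def PreTilde (step : W → W → Prop) (V : Set W) : Set W := (Pre step Vᶜ)ᶜ

/-!
Each least fixpoint is a prefixpoint of the other functional. Since every move from `W_B` goes
to `W_A`, only the `W_A`-part of `X` matters in `Pre-tilde(X)` at a `W_B`-position, and a
`W_A`-position lies in a fixpoint `X` of `F` or `F'` exactly when it lies in `V ∪ Pre(X)`
(this is where `W_A ∩ W_B = ∅` enters); `Pre(C↑(X)) = Pre(X)` removes the upward closures.
-/

section

variable {α : Type*}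

theorem mem_preTilde_iff {step : α → α → Prop} {X : Set α} {σ : α} :
    σ ∈ PreTilde step X ↔ ∀ ρ, step σ ρ → ρ ∈ X := by
  simp only [PreTilde, Pre, Set.mem_compl_iff, Set.mem_ofPred_eq, not_exists, not_and]
  exact forall_congr' fun ρ => ⟨fun h hs => by_contra fun hρ => h hρ hs, fun h hρ hs => hρ (h hs)⟩

theorem inter_preTilde_subset_inter_preTilde {step : α → α → Prop} {A B X Y : Set α}
    (hBA : ∀ σ ρ, σ ∈ B → step σ ρ → ρ ∈ A) (hXY : A ∩ X ⊆ Y) :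
    B ∩ PreTilde step X ⊆ B ∩ PreTilde step Y := by
  rintro σ ⟨hσB, hσX⟩
  exact ⟨hσB, mem_preTilde_iff.2 fun ρ hs => hXY ⟨hBA σ ρ hσB hs, mem_preTilde_iff.1 hσX ρ hs⟩⟩

theorem inter_union_union_subset_of_disjoint {A B V P Q : Set α} (h : Disjoint A B) :
    A ∩ (V ∪ (A ∩ P) ∪ (B ∩ Q)) ⊆ V ∪ P := by
  rintro x ⟨hA, (hV | ⟨-, hP⟩) | ⟨hB, -⟩⟩
  · exact Or.inl hV
  · exact Or.inr hP
  · exact (Set.disjoint_left.1 h hA hB).elim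

theorem inter_union_subset_union_union (A B V P Q : Set α) :
    A ∩ (V ∪ P) ⊆ V ∪ (A ∩ P) ∪ (B ∩ Q) := by
  rintro x ⟨hA, hV | hP⟩
  · exact Or.inl (Or.inl hV)
  · exact Or.inl (Or.inr ⟨hA, hP⟩)

end

theorem reachability_game_unfolding_general (step : W → W → Prop)
    (WA WB : Set W) (hdisj : Disjoint WA WB)
    (hBA : ∀ σ ρ, σ ∈ WB → step σ ρ → ρ ∈ WA)
    (hcomp : ∀ X : Set W, Pre step X = Pre step (Cup X))
    (V : Set W)
    (F F' : Set W → Set W)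
    (hF : ∀ X, F X = V ∪ (WA ∩ Pre step X) ∪ (WB ∩ PreTilde step X))
    (hF' : ∀ X, F' X = V ∪ (WA ∩ Pre step (Cup X)) ∪
      (WB ∩ PreTilde step (V ∪ Pre step (Cup X))))
    (hFmono : Monotone F) (hF'mono : Monotone F') :
    OrderHom.lfp ⟨F, hFmono⟩ = OrderHom.lfp ⟨F', hF'mono⟩ := by
  set L := OrderHom.lfp (⟨F, hFmono⟩ : Set W →o Set W)
  set L' := OrderHom.lfp (⟨F', hF'mono⟩ : Set W →o Set W)
  have hL : F L = L := OrderHom.map_lfp (⟨F, hFmono⟩ : Set W →o Set W)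
  have hL' : F' L' = L' := OrderHom.map_lfp (⟨F', hF'mono⟩ : Set W →o Set W)
  apply le_antisymm
  · refine OrderHom.lfp_le _ ?_
    have hAL' : WA ∩ L' ⊆ V ∪ Pre step (Cup L') := by
      conv_lhs => rw [← hL', hF']
      exact inter_union_union_subset_of_disjoint hdisj
    calc F L' = V ∪ (WA ∩ Pre step (Cup L')) ∪ (WB ∩ PreTilde step L') := by rw [hF, hcomp]
      _ ⊆ F' L' := by
        rw [hF']
        exact Set.union_subset_union_right _ (inter_preTilde_subset_inter_preTilde hBA hAL')
      _ = L' := hL'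
  · refine OrderHom.lfp_le _ ?_
    have hAL : WA ∩ (V ∪ Pre step L) ⊆ L := by
      conv_rhs => rw [← hL, hF]
      exact inter_union_subset_union_union _ _ _ _ _
    calc F' L = V ∪ (WA ∩ Pre step L) ∪ (WB ∩ PreTilde step (V ∪ Pre step L)) := by
          rw [hF', ← hcomp]
      _ ⊆ F L := by
        rw [hF]
        exact Set.union_subset_union_right _ (inter_preTilde_subset_inter_preTilde hBA hAL)
      _ = L := hL

/-- Unfolding the reachability-game fixpoint: under strict alternation between
`W_A` and `W_B`, and compatibility `Pre(X) = Pre(C↑(X))`, the least fixpoint of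
`F(X) = V ∪ (W_A ∩ Pre(X)) ∪ (W_B ∩ Pre-tilde(X))` equals the least fixpoint of
`F'(X) = V ∪ (W_A ∩ Pre(C↑(X))) ∪ (W_B ∩ Pre-tilde(V ∪ Pre(C↑(X))))`. -/
theorem reachability_game_unfolding (step : W → W → Prop)
    (WA WB : Set W) (hpart : WA ∪ WB = Set.univ) (hdisj : Disjoint WA WB)
    (hAB : ∀ σ ρ, σ ∈ WA → step σ ρ → ρ ∈ WB)
    (hBA : ∀ σ ρ, σ ∈ WB → step σ ρ → ρ ∈ WA)
    (hcomp : ∀ X : Set W, Pre step X = Pre step (Cup X))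
    (V : Set W)
    (F F' : Set W → Set W)
    (hF : ∀ X, F X = V ∪ (WA ∩ Pre step X) ∪ (WB ∩ PreTilde step X))
    (hF' : ∀ X, F' X = V ∪ (WA ∩ Pre step (Cup X)) ∪
      (WB ∩ PreTilde step (V ∪ Pre step (Cup X))))
    (hFmono : Monotone F) (hF'mono : Monotone F') :
    OrderHom.lfp ⟨F, hFmono⟩ = OrderHom.lfp ⟨F', hF'mono⟩ :=
  reachability_game_unfolding_general step WA WB hdisj hBA hcomp V F F' hF hF' hFmono hF'mono
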